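/- Per-model validity correspondence: Let M = ⟨S, av, pv, ob, V⟩ be a CJ model with the induced interpretation of the embedding over S. Then a CJ formula φ is valid in M (i.e., M,s ⊨ φ for all s ∈ S) if and only if vld ⌊φ⌋ holds, where vld A := ∀ s ∈ S, A s. -/
import Mathlib


/-- Formulas of the Carmo–Jones dyadic deontic logic. -/
inductive CJForm : Type where
  | atom : ℕ → CJForm
  | neg  : CJForm → CJForm
  | disj : CJForm → CJForm → CJForm
  | box  : CJForm → CJForm
  | boxa : CJForm → CJForm
  | boxp : CJForm → CJForm
  /-- `cond φ ψ` represents ○(ψ/φ): "it ought to be ψ, given φ". -/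
  | cond : CJForm → CJForm → CJForm
  | oblA : CJForm → CJForm
  | oblP : CJForm → CJForm

/-- A Carmo–Jones model over a (nonempty) type `S` of worlds. -/
structure CJModel (S : Type) where
  ne : Nonempty S
  av : S → Set S
  pv : S → Set S
  ob : Set S → Set (Set S)
  V  : ℕ → Set S
  av_nonempty : ∀ s, (av s).Nonempty
  av_sub_pv : ∀ s, av s ⊆ pv s
  pv_refl : ∀ s, s ∈ pv s
  ob1 : ∀ X : Set S, ∅ ∉ ob X
  ob2 : ∀ X Y Z : Set S, Y ∩ X = Z ∩ X → (Y ∈ ob X ↔ Z ∈ ob X)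
  ob3 : ∀ (β : Set (Set S)) (X : Set S), β ⊆ ob X → β.Nonempty →
        (⋂₀ β ∩ X).Nonempty → ⋂₀ β ∈ ob X
  ob4 : ∀ X Y Z : Set S, Y ⊆ X → Y ∈ ob X → X ⊆ Z → (Z \ X) ∪ Y ∈ ob Z
  ob5 : ∀ X Y Z : Set S, Y ⊆ X → Z ∈ ob X → (Y ∩ Z).Nonempty → Z ∈ ob Y

/-- Satisfaction `M,s ⊨ δ` in a CJ model. -/
def CJModel.sat {S : Type} (M : CJModel S) : CJForm → S → Prop
  | .atom n, s => s ∈ M.V n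
  | .neg φ, s => ¬ M.sat φ s
  | .disj φ ψ, s => M.sat φ s ∨ M.sat ψ s
  | .box φ, _ => {t | M.sat φ t} = (Set.univ : Set S)
  | .boxa φ, s => M.av s ⊆ {t | M.sat φ t}
  | .boxp φ, s => M.pv s ⊆ {t | M.sat φ t}
  | .cond φ ψ, _ => {t | M.sat ψ t} ∈ M.ob {t | M.sat φ t}
  | .oblA φ, s => {t | M.sat φ t} ∈ M.ob (M.av s) ∧ (M.av s ∩ {t | ¬ M.sat φ t}).Nonempty
  | .oblP φ, s => {t | M.sat φ t} ∈ M.ob (M.pv s) ∧ (M.pv s ∩ {t | ¬ M.sat φ t}).Nonempty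

/-- The shallow semantical embedding ⌊·⌋ of CJ formulas as predicates on a type
`i` of worlds, relative to `av`, `pv`, `ob` and an interpretation `val` of the
propositional symbols. -/
def emb {i : Type} (av pv : i → i → Prop) (ob : (i → Prop) → (i → Prop) → Prop)
    (val : ℕ → i → Prop) : CJForm → i → Prop
  | .atom n => val n
  | .neg φ => fun x => ¬ emb av pv ob val φ x
  | .disj φ ψ => fun x => emb av pv ob val φ x ∨ emb av pv ob val ψ x
  | .box φ => fun _ => ∀ y, emb av pv ob val φ y
  | .boxa φ => fun x => ∀ y, av x y → emb av pv ob val φ y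
  | .boxp φ => fun x => ∀ y, pv x y → emb av pv ob val φ y
  | .cond φ ψ => fun _ => ob (emb av pv ob val φ) (emb av pv ob val ψ)
  | .oblA φ => fun x => ob (av x) (emb av pv ob val φ) ∧ ∃ y, av x y ∧ ¬ emb av pv ob val φ y
  | .oblP φ => fun x => ob (pv x) (emb av pv ob val φ) ∧ ∃ y, pv x y ∧ ¬ emb av pv ob val φ y

/-- The axioms AV, PV1, PV2, OB1–OB5 on the embedding's parameters. -/
def CJAxioms {i : Type} (av pv : i → i → Prop)
    (ob : (i → Prop) → (i → Prop) → Prop) : Prop :=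
  (∀ w, ∃ v, av w v) ∧                                       -- AV
  (∀ w v, av w v → pv w v) ∧                                 -- PV1
  (∀ w, pv w w) ∧                                            -- PV2
  (∀ X : i → Prop, ¬ ob X (fun _ => False)) ∧                -- OB1
  (∀ X Y Z : i → Prop,                                       -- OB2
    (∀ w, (Y w ∧ X w) ↔ (Z w ∧ X w)) → (ob X Y ↔ ob X Z)) ∧
  (∀ (β : (i → Prop) → Prop) (X : i → Prop),                 -- OB3
    ((∀ Z, β Z → ob X Z) ∧ (∃ Z, β Z)) →
    ((∃ y, (∀ Z, β Z → Z y) ∧ X y) → ob X (fun w => ∀ Z, β Z → Z w))) ∧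
  (∀ X Y Z : i → Prop,                                       -- OB4
    ((∀ w, Y w → X w) ∧ ob X Y ∧ (∀ w, X w → Z w)) →
    ob Z (fun w => (Z w ∧ ¬ X w) ∨ Y w)) ∧
  (∀ X Y Z : i → Prop,                                       -- OB5
    ((∀ w, Y w → X w) ∧ ob X Z ∧ (∃ w, Y w ∧ Z w)) → ob Y Z)

/-- The accessibility relation of a CJ model, as a binary predicate. -/
def CJModel.avR {S : Type} (M : CJModel S) : S → S → Prop := fun w v => v ∈ M.av w

def CJModel.pvR {S : Type} (M : CJModel S) : S → S → Prop := fun w v => v ∈ M.pv w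

/-- The `ob` function of a CJ model, acting on predicates. -/
def CJModel.obR {S : Type} (M : CJModel S) : (S → Prop) → (S → Prop) → Prop :=
  fun X Y => {s | Y s} ∈ M.ob {s | X s}

def CJModel.val {S : Type} (M : CJModel S) : ℕ → S → Prop := fun n s => s ∈ M.V n

/-- The embedding induced by a CJ model `M` over its type of worlds. -/
def CJModel.emb {S : Type} (M : CJModel S) : CJForm → S → Prop :=
  _root_.emb M.avR M.pvR M.obR M.val

/-- Validity of an embedded formula: truth at every world. -/
def vld {i : Type} (A : i → Prop) : Prop := ∀ s, A s

lemma sat_iff_emb {S : Type} (M : CJModel S) (φ : CJForm) :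
    ∀ s : S, M.sat φ s ↔ M.emb φ s := by
  induction φ with
  | atom n => intro s; rfl
  | neg φ ih =>
      intro s
      simp only [CJModel.sat, CJModel.emb, emb] at *
      exact not_congr (ih s)
  | disj φ ψ ihφ ihψ =>
      intro s
      simp only [CJModel.sat, CJModel.emb, emb] at *
      exact or_congr (ihφ s) (ihψ s)
  | box φ ih =>
      intro s
      simp only [CJModel.sat, CJModel.emb, emb, Set.eq_univ_iff_forall,
        Set.mem_setOf_eq] at *
      exact forall_congr' fun y => ih y
  | boxa φ ih =>
      intro s
      simp only [CJModel.sat, CJModel.emb, emb, Set.subset_def,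
        Set.mem_setOf_eq] at *
      constructor
      · intro h y hy; exact (ih y).mp (h y hy)
      · intro h y hy; exact (ih y).mpr (h y hy)
  | boxp φ ih =>
      intro s
      simp only [CJModel.sat, CJModel.emb, emb, Set.subset_def,
        Set.mem_setOf_eq] at *
      constructor
      · intro h y hy; exact (ih y).mp (h y hy)
      · intro h y hy; exact (ih y).mpr (h y hy)
  | cond φ ψ ihφ ihψ =>
      intro s
      have hφ : {t | M.sat φ t} = {t | M.emb φ t} := Set.ext fun t => ihφ t
      have hψ : {t | M.sat ψ t} = {t | M.emb ψ t} := Set.ext fun t => ihψ t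
      simp only [CJModel.sat, CJModel.emb, emb, CJModel.obR] at *
      rw [hφ, hψ]
  | oblA φ ih =>
      intro s
      have hφ : {t | M.sat φ t} = {t | M.emb φ t} := Set.ext fun t => ih t
      simp only [CJModel.sat, CJModel.emb, emb, CJModel.obR, CJModel.avR,
        Set.Nonempty, Set.mem_inter_iff, Set.mem_setOf_eq] at *
      constructor
      · rintro ⟨h1, y, hy, hn⟩
        refine ⟨by rwa [show {s_1 | s_1 ∈ M.av s} = M.av s from rfl, ← hφ], y, hy, by rw [← ih y]; exact hn⟩
      · rintro ⟨h1, y, hy, hn⟩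
        refine ⟨by rwa [show {s_1 | s_1 ∈ M.av s} = M.av s from rfl, ← hφ] at h1, y, hy, by rw [ih y]; exact hn⟩
  | oblP φ ih =>
      intro s
      have hφ : {t | M.sat φ t} = {t | M.emb φ t} := Set.ext fun t => ih t
      simp only [CJModel.sat, CJModel.emb, emb, CJModel.obR, CJModel.pvR,
        Set.Nonempty, Set.mem_inter_iff, Set.mem_setOf_eq] at *
      constructor
      · rintro ⟨h1, y, hy, hn⟩
        refine ⟨by rwa [show {s_1 | s_1 ∈ M.pv s} = M.pv s from rfl, ← hφ], y, hy, by rw [← ih y]; exact hn⟩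
      · rintro ⟨h1, y, hy, hn⟩
        refine ⟨by rwa [show {s_1 | s_1 ∈ M.pv s} = M.pv s from rfl, ← hφ] at h1, y, hy, by rw [ih y]; exact hn⟩

/-- **Per-model validity correspondence.** A CJ formula is valid in a CJ model
`M` (true at every world) iff `vld ⌊φ⌋` holds in the induced interpretation. -/
theorem per_model_validity {S : Type} (M : CJModel S) (φ : CJForm) :
    (∀ s : S, M.sat φ s) ↔ vld (M.emb φ) := by
  exact forall_congr' fun s => sat_iff_emb M φ s
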